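/- arXiv:2111.08287 — 3 statements merged into one kernel-verified Lean document; each statement's English description precedes it below -/
import Mathlib

section
/- The enhanced Brauer algebra decomposes as a direct sum B(ε,n,r) = ⊕_{l=0}^{r} B(ε,n,r)_l of its subalgebras B(ε,n,r)_l, where B(ε,n,r)_l is the component acting on the subspace V̲_l^{⊗r} of the enhanced tensor space and annihilating V̲_k^{⊗r} for k ≠ l. -/
open Finset Matrix

namespace EnhancedBrauer

/- Coordinates: `V = ℂⁿ` with a nondegenerate bilinear form of matrix `Q`; the enhanced space
`V̲ = V ⊕ ℂη` is `ℂ^{n+1}`, the index `Fin.last n` playing the role of `η`.  The enhanced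
tensor power `V̲^{⊗r}` is `(Fin r → Fin (n+1)) → ℂ`, and its linear endomorphisms are
matrices indexed by `Fin r → Fin (n+1)` (acting by `mulVec`/`mulVecLin`).  For
`I ⊆ {1,…,r}`, the summand `V̲_I^{⊗r}` is spanned by the basis indices `k` with
`k i ≠ Fin.last n` exactly for `i ∈ I`. -/

/-- Coordinate matrix of the diagonal action of `g` on the `m`-th tensor power of `ℂ^N`. -/
noncomputable def PhiMat {N m : ℕ} (g : Matrix (Fin N) (Fin N) ℂ) :
    Matrix (Fin m → Fin N) (Fin m → Fin N) ℂ :=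
  fun k q => ∏ i, g (k i) (q i)

/-- Coordinate matrix of the place-permutation action of `s ∈ 𝔖_m`. -/
noncomputable def PsiMat {N m : ℕ} (s : Equiv.Perm (Fin m)) :
    Matrix (Fin m → Fin N) (Fin m → Fin N) ℂ :=
  fun k q => if q = k ∘ s then 1 else 0

/-- The index `k` has support exactly `I` (i.e. the corresponding basis vector of the
enhanced tensor power lies in `V̲_I^{⊗r}`). -/
def isSupp {n r : ℕ} (I : Finset (Fin r)) (k : Fin r → Fin (n + 1)) : Prop :=
  ∀ i, i ∈ I ↔ k i ≠ Fin.last n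

/-- The number of tensor factors of the basis index `k` coming from `V` (and not `η`). -/
def levelOf {n r : ℕ} (k : Fin r → Fin (n + 1)) : ℕ :=
  (Finset.univ.filter fun i => k i ≠ Fin.last n).card

/-- The basis index of `V̲_I^{⊗r}` whose `V`-entries are given by `a : Fin l → Fin n`,
arranged along the increasing enumeration of `I`. -/
noncomputable def emb {n r l : ℕ} (I : Finset (Fin r)) (hI : I.card = l)
    (a : Fin l → Fin n) : Fin r → Fin (n + 1) :=
  fun i => if h : i ∈ I then Fin.castSucc (a ((I.orderIsoOfFin hI).symm ⟨i, h⟩)) else Fin.last n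

/-- The operator `σ^I` acting as `σ = A` on `V̲_I^{⊗r} ≅ V^{⊗l}` and as `0` on every other
summand `V̲_K^{⊗r}`. -/
noncomputable def opMat {n r l : ℕ} (I : Finset (Fin r)) (hI : I.card = l)
    (A : Matrix (Fin l → Fin n) (Fin l → Fin n) ℂ) :
    Matrix (Fin r → Fin (n + 1)) (Fin r → Fin (n + 1)) ℂ :=
  fun k q => ∑ a : Fin l → Fin n, ∑ b : Fin l → Fin n,
    if k = emb I hI a ∧ q = emb I hI b then A a b else 0

/-- The operator `E_{I,J}`: the order-preserving place permutation carrying `V̲_J^{⊗r}`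
onto `V̲_I^{⊗r}`, extended by zero on all other summands. -/
noncomputable def EMat {n r l : ℕ} (I J : Finset (Fin r)) (hI : I.card = l)
    (hJ : J.card = l) :
    Matrix (Fin r → Fin (n + 1)) (Fin r → Fin (n + 1)) ℂ :=
  fun k q => ∑ a : Fin l → Fin n, if k = emb I hI a ∧ q = emb J hJ a then 1 else 0

/-- The Brauer algebra `B_l(εn) = End_G(V^{⊗l})`: all matrices commuting with the diagonal
action of the isometry group `G` of the form with matrix `Q`. -/
def BrauerSet (n l : ℕ) (Q : Matrix (Fin n) (Fin n) ℂ) :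
    Set (Matrix (Fin l → Fin n) (Fin l → Fin n) ℂ) :=
  {A | ∀ g : Matrix (Fin n) (Fin n) ℂ, gᵀ * Q * g = Q → PhiMat g * A = A * PhiMat g}

/-- The restriction `Ψ̲|_l(s)` of the place permutation action to the level-`l` summand
`V̲_l^{⊗r}`, extended by zero on the other levels. -/
noncomputable def PsiLevel {n r : ℕ} (l : ℕ) (s : Equiv.Perm (Fin r)) :
    Matrix (Fin r → Fin (n + 1)) (Fin r → Fin (n + 1)) ℂ :=
  fun k q => if levelOf (n := n) k = l ∧ q = k ∘ s then 1 else 0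

/-- The enhanced Brauer algebra `B(ε,n,r)`: the (non-unital) subalgebra of
`End_ℂ(V̲^{⊗r})` generated by `Ψ(𝔖_r)` and all `σ^I` with `σ ∈ B_{#I}(εn)`. -/
noncomputable def enhancedBrauer (n r : ℕ) (Q : Matrix (Fin n) (Fin n) ℂ) :
    NonUnitalSubalgebra ℂ (Matrix (Fin r → Fin (n + 1)) (Fin r → Fin (n + 1)) ℂ) :=
  NonUnitalAlgebra.adjoin ℂ
    ({M | ∃ s : Equiv.Perm (Fin r), M = PsiMat s} ∪
      {M | ∃ I : Finset (Fin r), ∃ A ∈ BrauerSet n I.card Q, M = opMat I rfl A})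

/-- The level-`l` piece `B(ε,n,r)_l`: the (non-unital) subalgebra of `End_ℂ(V̲^{⊗r})`
generated by `Ψ̲|_l(𝔖_r)` and all `σ^I` with `#I = l`, `σ ∈ B_l(εn)`; its elements act on
`V̲_l^{⊗r}` and annihilate `V̲_k^{⊗r}` for `k ≠ l`. -/
noncomputable def enhancedBrauerLevel (n r : ℕ) (Q : Matrix (Fin n) (Fin n) ℂ) (l : ℕ) :
    NonUnitalSubalgebra ℂ (Matrix (Fin r → Fin (n + 1)) (Fin r → Fin (n + 1)) ℂ) :=
  NonUnitalAlgebra.adjoin ℂ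
    ({M | ∃ s : Equiv.Perm (Fin r), M = PsiLevel l s} ∪
      {M | ∃ I : Finset (Fin r), ∃ hI : I.card = l, ∃ A ∈ BrauerSet n l Q,
        M = opMat I hI A})

end EnhancedBrauer

/-! Each generator of `B(ε,n,r)_l` is supported on the diagonal block of basis indices of
level `l`; blocks of different levels multiply to zero and are linearly independent.
The level projection `P_l = Σ_{#I = l} 1^I` lies in `B(ε,n,r)`, hence so does
`Ψ̲|_l(s) = P_l Ψ(s)`. Conversely `Ψ(s) = Σ_l Ψ̲|_l(s)` and `σ^I ∈ B(ε,n,r)_{#I}`, and by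
orthogonality of the blocks the sum of the level algebras is closed under multiplication,
so it contains `B(ε,n,r)`. -/

namespace Submodule

variable {ι R M : Type*} [Semiring R] [AddCommMonoid M] [Module R M]

theorem iSupIndep_of_projections {p : ι → Submodule R M} (π : ι → M →ₗ[R] M)
    (hself : ∀ i, ∀ x ∈ p i, π i x = x)
    (hother : Pairwise fun i j => ∀ x ∈ p j, π i x = 0) : iSupIndep p := by
  intro i
  rw [Submodule.disjoint_def]
  intro x hxi hx
  have hker : (⨆ (j) (_ : j ≠ i), p j) ≤ LinearMap.ker (π i) :=
    iSup₂_le fun j hj y hy => hother (Ne.symm hj) y hy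
  rw [← hself i x hxi]
  exact hker hx

end Submodule

namespace NonUnitalSubalgebra

variable {ι R A : Type*} [CommSemiring R] [Semiring A] [Module R A] [IsScalarTower R A A]

theorem mul_mem_iSup_toSubmodule (S : ι → NonUnitalSubalgebra R A)
    (horth : Pairwise fun i j => ∀ x ∈ S i, ∀ y ∈ S j, x * y = 0) {x y : A}
    (hx : x ∈ ⨆ i, (S i).toSubmodule) (hy : y ∈ ⨆ i, (S i).toSubmodule) :
    x * y ∈ ⨆ i, (S i).toSubmodule := by
  have hle : (⨆ i, (S i).toSubmodule) * (⨆ i, (S i).toSubmodule) ≤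
      ⨆ i, (S i).toSubmodule := by
    rw [Submodule.iSup_mul]
    refine iSup_le fun i => ?_
    rw [Submodule.mul_iSup]
    refine iSup_le fun j => Submodule.mul_le.mpr fun a ha b hb => ?_
    obtain rfl | hij := eq_or_ne i j
    · exact Submodule.mem_iSup_of_mem i ((S i).mul_mem ha hb)
    · rw [horth hij a ha b hb]
      exact zero_mem _
  exact hle (Submodule.mul_mem_mul hx hy)

end NonUnitalSubalgebra

namespace Matrix

variable {κ β R : Type*} [Fintype κ] [CommSemiring R]

variable (R) in
def blockSubalgebra (f : κ → β) (b : β) : NonUnitalSubalgebra R (Matrix κ κ R) where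
  carrier := {M | ∀ k q, M k q ≠ 0 → f k = b ∧ f q = b}
  add_mem' {M N} hM hN k q h := by
    by_cases hMkq : M k q = 0
    · exact hN k q (by simpa [hMkq] using h)
    · exact hM k q hMkq
  zero_mem' k q h := absurd rfl h
  mul_mem' {M N} hM hN k q h := by
    obtain ⟨x, -, hx⟩ := Finset.exists_ne_zero_of_sum_ne_zero h
    exact ⟨(hM k x (left_ne_zero_of_mul hx)).1, (hN x q (right_ne_zero_of_mul hx)).2⟩
  smul_mem' c M hM k q h := hM k q (right_ne_zero_of_mul h)

theorem mul_eq_zero_of_mem_blockSubalgebra {f : κ → β} {b b' : β} (hb : b ≠ b')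
    {M N : Matrix κ κ R} (hM : M ∈ blockSubalgebra R f b) (hN : N ∈ blockSubalgebra R f b') :
    M * N = 0 := by
  ext k q
  refine Finset.sum_eq_zero fun x _ => ?_
  by_contra h
  exact hb ((hM k x (left_ne_zero_of_mul h)).2.symm.trans (hN x q (right_ne_zero_of_mul h)).1)

theorem iSupIndep_blockSubalgebra (f : κ → β) :
    iSupIndep fun b => (blockSubalgebra R f b).toSubmodule := by
  classical
  refine Submodule.iSupIndep_of_projections
    (fun b => LinearMap.mulLeft R (diagonal fun k => if f k = b then 1 else 0)) ?_ ?_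
  · intro b M hM
    ext k q
    by_cases hk : f k = b
    · simp [diagonal_mul, hk]
    · have hMkq : M k q = 0 := not_not.mp fun h => hk (hM k q h).1
      simp [diagonal_mul, hk, hMkq]
  · intro b b' hb M hM
    ext k q
    by_cases hk : f k = b
    · have hMkq : M k q = 0 := not_not.mp fun h => hb (hk.symm.trans (hM k q h).1)
      simp [diagonal_mul, hk, hMkq]
    · simp [diagonal_mul, hk]

end Matrix

namespace EnhancedBrauer

variable {n r l : ℕ}

theorem levelOf_comp_perm (k : Fin r → Fin (n + 1)) (s : Equiv.Perm (Fin r)) :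
    levelOf (k ∘ s) = levelOf k :=
  Finset.card_equiv s (by simp)

theorem isSupp_iff_eq_filter {I : Finset (Fin r)} {k : Fin r → Fin (n + 1)} :
    isSupp I k ↔ I = univ.filter fun i => k i ≠ Fin.last n := by
  simp [isSupp, Finset.ext_iff]

theorem levelOf_eq_card_of_isSupp {I : Finset (Fin r)} {k : Fin r → Fin (n + 1)}
    (h : isSupp I k) : levelOf k = I.card := by
  rw [isSupp_iff_eq_filter.mp h, levelOf]

theorem isSupp_emb (I : Finset (Fin r)) (hI : I.card = l) (a : Fin l → Fin n) :
    isSupp I (emb I hI a) := by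
  intro i
  by_cases h : i ∈ I <;> simp [emb, h, (Fin.castSucc_lt_last _).ne]

theorem emb_injective (I : Finset (Fin r)) (hI : I.card = l) :
    Function.Injective (emb (n := n) I hI) := by
  intro a b hab
  funext j
  have hj := congrFun hab (I.orderIsoOfFin hI j)
  simp only [emb, Finset.coe_mem, dif_pos, Subtype.coe_eta, OrderIso.symm_apply_apply] at hj
  exact Fin.castSucc_injective _ hj

theorem exists_emb_of_isSupp {I : Finset (Fin r)} {k : Fin r → Fin (n + 1)} (hk : isSupp I k)
    (hI : I.card = l) : ∃ a, emb I hI a = k := by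
  refine ⟨fun j => (k (I.orderIsoOfFin hI j)).castPred ((hk _).mp (I.orderIsoOfFin hI j).2), ?_⟩
  funext i
  by_cases hi : i ∈ I
  · simp [emb, hi]
  · simpa [emb, hi, eq_comm] using mt (hk i).mpr hi

instance (I : Finset (Fin r)) : DecidablePred (isSupp (n := n) I) :=
  fun _ => decidable_of_iff _ isSupp_iff_eq_filter.symm

theorem opMat_emb_emb (I : Finset (Fin r)) (hI : I.card = l)
    (A : Matrix (Fin l → Fin n) (Fin l → Fin n) ℂ) (a b : Fin l → Fin n) :
    opMat I hI A (emb I hI a) (emb I hI b) = A a b := by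
  simp [opMat, (emb_injective I hI).eq_iff, ite_and]

theorem opMat_apply_eq_zero {I : Finset (Fin r)} (hI : I.card = l)
    (A : Matrix (Fin l → Fin n) (Fin l → Fin n) ℂ) {k q : Fin r → Fin (n + 1)}
    (hkq : ¬(isSupp I k ∧ isSupp I q)) : opMat I hI A k q = 0 := by
  refine Finset.sum_eq_zero fun a _ => Finset.sum_eq_zero fun b _ => if_neg ?_
  rintro ⟨rfl, rfl⟩
  exact hkq ⟨isSupp_emb I hI a, isSupp_emb I hI b⟩

theorem opMat_one (I : Finset (Fin r)) (hI : I.card = l) :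
    opMat (n := n) I hI 1 = diagonal fun k => if isSupp I k then 1 else 0 := by
  ext k q
  by_cases hkq : isSupp I k ∧ isSupp I q
  · obtain ⟨a, rfl⟩ := exists_emb_of_isSupp hkq.1 hI
    obtain ⟨b, rfl⟩ := exists_emb_of_isSupp hkq.2 hI
    simp [opMat_emb_emb, one_apply, diagonal_apply, (emb_injective I hI).eq_iff, isSupp_emb]
  · rw [opMat_apply_eq_zero hI 1 hkq, diagonal_apply]
    aesop

noncomputable def levelProj (n r l : ℕ) :
    Matrix (Fin r → Fin (n + 1)) (Fin r → Fin (n + 1)) ℂ :=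
  diagonal fun k => if levelOf k = l then 1 else 0

theorem sum_opMat_one (l : ℕ) :
    ∑ I ∈ univ.filter (·.card = l), opMat (n := n) (r := r) I rfl 1 = levelProj n r l := by
  ext k q
  simp only [opMat_one, levelProj, Matrix.sum_apply, diagonal_apply, isSupp_iff_eq_filter]
  by_cases hkq : k = q <;> simp [hkq, Finset.sum_ite_eq', levelOf]

theorem levelProj_mul_psiMat (l : ℕ) (s : Equiv.Perm (Fin r)) :
    levelProj n r l * PsiMat s = PsiLevel l s := by
  ext k q
  simp only [levelProj, PsiMat, PsiLevel, diagonal_mul, ite_zero_mul_ite_zero, mul_one]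

theorem levelOf_le (k : Fin r → Fin (n + 1)) : levelOf k ≤ r :=
  (Finset.card_le_univ _).trans_eq (Fintype.card_fin r)

theorem sum_levelProj : ∑ l : Fin (r + 1), levelProj n r l = 1 := by
  ext k q
  simp only [levelProj, Matrix.sum_apply, diagonal_apply, one_apply]
  obtain rfl | hkq := eq_or_ne k q
  · simp only [if_true]
    rw [Fin.sum_univ_eq_sum_range (fun l => if levelOf k = l then (1 : ℂ) else 0),
      Finset.sum_ite_eq, if_pos (Finset.mem_range.mpr (Nat.lt_succ_of_le (levelOf_le k)))]
  · simp [hkq]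

theorem psiMat_eq_sum_psiLevel (s : Equiv.Perm (Fin r)) :
    PsiMat s = ∑ l : Fin (r + 1), PsiLevel (n := n) l s := by
  simp_rw [← levelProj_mul_psiMat, ← Finset.sum_mul, sum_levelProj, one_mul]

theorem psiLevel_mem_blockSubalgebra (l : ℕ) (s : Equiv.Perm (Fin r)) :
    PsiLevel (n := n) l s ∈ Matrix.blockSubalgebra ℂ levelOf l := by
  intro k q h
  obtain ⟨hk, rfl⟩ := (ite_ne_right_iff.mp h).1
  exact ⟨hk, (levelOf_comp_perm k s).trans hk⟩

theorem opMat_mem_blockSubalgebra (I : Finset (Fin r)) (hI : I.card = l)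
    (A : Matrix (Fin l → Fin n) (Fin l → Fin n) ℂ) :
    opMat I hI A ∈ Matrix.blockSubalgebra ℂ levelOf l := by
  intro k q h
  obtain ⟨hk, hq⟩ := not_not.mp (mt (opMat_apply_eq_zero hI A) h)
  exact ⟨(levelOf_eq_card_of_isSupp hk).trans hI, (levelOf_eq_card_of_isSupp hq).trans hI⟩

theorem enhancedBrauerLevel_le_blockSubalgebra (Q : Matrix (Fin n) (Fin n) ℂ) (l : ℕ) :
    enhancedBrauerLevel n r Q l ≤ Matrix.blockSubalgebra ℂ levelOf l := by
  refine NonUnitalAlgebra.adjoin_le ?_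
  rintro M (⟨s, rfl⟩ | ⟨I, hI, A, -, rfl⟩)
  exacts [psiLevel_mem_blockSubalgebra l s, opMat_mem_blockSubalgebra I hI A]

theorem enhancedBrauerLevel_le_enhancedBrauer (Q : Matrix (Fin n) (Fin n) ℂ) (l : ℕ) :
    enhancedBrauerLevel n r Q l ≤ enhancedBrauer n r Q := by
  refine NonUnitalAlgebra.adjoin_le ?_
  rintro M (⟨s, rfl⟩ | ⟨I, rfl, A, hA, rfl⟩)
  · rw [← levelProj_mul_psiMat, ← sum_opMat_one]
    refine mul_mem (sum_mem fun I _ => NonUnitalAlgebra.subset_adjoin ℂ ?_)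
      (NonUnitalAlgebra.subset_adjoin ℂ (Or.inl ⟨s, rfl⟩))
    exact Or.inr ⟨I, 1, fun g _ => by rw [mul_one, one_mul], rfl⟩
  · exact NonUnitalAlgebra.subset_adjoin ℂ (Or.inr ⟨I, A, hA, rfl⟩)

theorem enhancedBrauer_le_iSup_enhancedBrauerLevel (Q : Matrix (Fin n) (Fin n) ℂ) :
    (enhancedBrauer n r Q).toSubmodule ≤
      ⨆ l : Fin (r + 1), (enhancedBrauerLevel n r Q l).toSubmodule := by
  have horth : Pairwise fun l m : Fin (r + 1) => ∀ x ∈ enhancedBrauerLevel n r Q l,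
      ∀ y ∈ enhancedBrauerLevel n r Q m, x * y = 0 := fun l m hlm x hx y hy =>
    Matrix.mul_eq_zero_of_mem_blockSubalgebra (Fin.val_injective.ne hlm)
      (enhancedBrauerLevel_le_blockSubalgebra Q l hx)
      (enhancedBrauerLevel_le_blockSubalgebra Q m hy)
  refine NonUnitalAlgebra.adjoin_le (S := Submodule.toNonUnitalSubalgebra _
    fun x y => NonUnitalSubalgebra.mul_mem_iSup_toSubmodule _ horth) ?_
  rintro M (⟨s, rfl⟩ | ⟨I, A, hA, rfl⟩)
  · rw [psiMat_eq_sum_psiLevel]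
    exact sum_mem fun l _ => Submodule.mem_iSup_of_mem l
      (NonUnitalAlgebra.subset_adjoin ℂ (Or.inl ⟨s, rfl⟩))
  · have hI : I.card < r + 1 :=
      Nat.lt_succ_of_le (I.card_le_univ.trans_eq (Fintype.card_fin r))
    exact Submodule.mem_iSup_of_mem ⟨I.card, hI⟩
      (NonUnitalAlgebra.subset_adjoin ℂ (Or.inr ⟨I, rfl, A, hA, rfl⟩))

/-- The enhanced Brauer algebra decomposes as the internal direct sum
`B(ε,n,r) = ⊕_{l=0}^{r} B(ε,n,r)_l` of its level subalgebras. -/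
theorem enhancedBrauer_direct_sum (n r : ℕ) (Q : Matrix (Fin n) (Fin n) ℂ) :
    (enhancedBrauer n r Q).toSubmodule =
        (⨆ l : Fin (r + 1), (enhancedBrauerLevel n r Q l).toSubmodule) ∧
      iSupIndep (fun l : Fin (r + 1) => (enhancedBrauerLevel n r Q l).toSubmodule) := by
  refine ⟨le_antisymm (enhancedBrauer_le_iSup_enhancedBrauerLevel Q)
    (iSup_le fun l => enhancedBrauerLevel_le_enhancedBrauer Q l), ?_⟩
  exact ((Matrix.iSupIndep_blockSubalgebra levelOf).comp Fin.val_injective).mono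
    fun l => enhancedBrauerLevel_le_blockSubalgebra Q l

end EnhancedBrauer
end

section
/- Let G be a closed subgroup of GL(V) and G̲ = G ×_ρ V the enhanced group acting on V̲^{⊗r}. For any f ∈ End_{G̲}(V̲^{⊗r}) and 0 ≤ l ≤ r, we have f(V̲_l^{⊗r}) ⊆ W_l, where W_l := ⊕_{t=l}^{r} V̲_t^{⊗r}. In particular every G̲-endomorphism of V̲^{⊗r} preserves the filtration W_0 ⊇ W_1 ⊇ ... ⊇ W_r. -/
open Finset Matrix

namespace EnhancedBrauer

/-- The matrix on `V̲ = V ⊕ ℂη = ℂ^{n+1}` of the element `(g, v)` of the enhanced group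
`G̲ = G ×_ρ V`: it acts as `g` on `V` and sends `η` to `v + η`. -/
noncomputable def encMat {n : ℕ} (g : Matrix (Fin n) (Fin n) ℂ) (v : Fin n → ℂ) :
    Matrix (Fin (n + 1)) (Fin (n + 1)) ℂ :=
  fun i j =>
    if hi : (i : ℕ) < n then
      (if hj : (j : ℕ) < n then g ⟨i, hi⟩ ⟨j, hj⟩ else v ⟨i, hi⟩)
    else (if (j : ℕ) < n then 0 else 1)

/-- The matrix on `V̲` of a torus element `c ∈ 𝔾_m`: identity on `V` and `c` on `η`. -/
noncomputable def torMat (n : ℕ) (c : ℂ) : Matrix (Fin (n + 1)) (Fin (n + 1)) ℂ :=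
  Matrix.diagonal (fun i => if (i : ℕ) < n then 1 else c)

/-!
For `a : Fin n`, the matrices `e_a = E_{a η}`, `f_a = E_{η a}` and `h_a = E_{a a} - E_{η η}` form an
`sl₂`-triple in `𝔤𝔩(V̲)`. The differential of `g ↦ g^{⊗ r}` carries it to an `sl₂`-triple in
`𝔤𝔩(V̲^{⊗ r})` whose `h` is diagonal in the tensor basis, the weight of a basis tensor being its
number of `a`-factors minus its number of `η`-factors. Differentiating the equivariance of `F`
under `e^{t e_a}` at `t = 0` shows that `F` commutes with the image of `e_a`, so every weight
component of `F` for `ad h` is a primitive vector, and its weight is a natural number by the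
representation theory of `sl₂`. Thus a nonzero entry `F_{k q}` does not lower any of the `n`
weights, and their sum over `a`, which is `(n + 1) · level - n r`, shows `level q ≤ level k`.
-/

attribute [local instance] LieRing.ofAssociativeRing

theorem _root_.IsSl2Triple.map {R L L' : Type*} [CommRing R] [LieRing L] [LieAlgebra R L]
    [LieRing L'] [LieAlgebra R L'] (φ : L →ₗ⁅R⁆ L') {h e f : L} (t : IsSl2Triple h e f)
    (hφh : φ h ≠ 0) : IsSl2Triple (φ h) (φ e) (φ f) where
  h_ne_zero := hφh
  lie_e_f := by rw [← φ.map_lie, t.lie_e_f]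
  lie_h_e_nsmul := by rw [← φ.map_lie, t.lie_h_e_nsmul, map_nsmul]
  lie_h_f_nsmul := by rw [← φ.map_lie, t.lie_h_f_nsmul, map_neg, map_nsmul]

section Diagonal

variable {K R : Type*} [Fintype K] [DecidableEq K] [CommRing R]

lemma lie_diagonal_apply (w : K → R) (X : Matrix K K R) (k q : K) :
    ⁅diagonal w, X⁆ k q = (w k - w q) * X k q := by
  rw [Ring.lie_def, Matrix.sub_apply, diagonal_mul, mul_diagonal, sub_mul, mul_comm (X k q)]

lemma isSl2Triple_single [Nontrivial R] {i j : K} (hij : i ≠ j) :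
    IsSl2Triple (diagonal (Pi.single i 1 - Pi.single j 1 : K → R)) (single i j 1)
      (single j i 1) where
  h_ne_zero := by
    rw [Ne, diagonal_eq_zero, funext_iff, not_forall]
    exact ⟨i, by simp [hij]⟩
  lie_e_f := by
    ext a b
    simp only [Ring.lie_def, Matrix.sub_apply, single_mul_single_same, one_mul, diagonal_apply,
      single_apply, Pi.sub_apply, Pi.single_apply]
    by_cases hab : a = b <;> aesop
  lie_h_e_nsmul := by
    ext a b
    rw [lie_diagonal_apply, Matrix.smul_apply, single_apply]
    by_cases h : i = a ∧ j = b
    · obtain ⟨rfl, rfl⟩ := h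
      norm_num [hij, hij.symm]
    · simp [h]
  lie_h_f_nsmul := by
    ext a b
    rw [lie_diagonal_apply, Matrix.neg_apply, Matrix.smul_apply, single_apply]
    by_cases h : j = a ∧ i = b
    · obtain ⟨rfl, rfl⟩ := h
      norm_num [hij, hij.symm]
    · simp [h]

end Diagonal

section WeightPart

variable {K R : Type*} [Fintype K] [CommRing R] [DecidableEq R]

def weightPart (w : K → R) (μ : R) (F : Matrix K K R) : Matrix K K R :=
  of fun k q => if w k - w q = μ then F k q else 0

lemma mul_weightPart {w : K → R} {E : Matrix K K R} {c : R}
    (hE : ∀ a b, E a b ≠ 0 → w a - w b = c) (μ : R) (F : Matrix K K R) :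
    E * weightPart w μ F = weightPart w (c + μ) (E * F) := by
  ext k q
  simp only [weightPart, of_apply, mul_apply]
  by_cases hkq : w k - w q = c + μ
  · refine (sum_congr rfl fun p _ => ?_).trans (if_pos hkq).symm
    by_cases hp : E k p = 0
    · simp [hp]
    · rw [if_pos (by linear_combination hkq - hE k p hp)]
  · refine (sum_eq_zero fun p _ => ?_).trans (if_neg hkq).symm
    by_cases hp : E k p = 0
    · simp [hp]
    · rw [if_neg fun h => hkq (by linear_combination h + hE k p hp), mul_zero]

lemma weightPart_mul {w : K → R} {E : Matrix K K R} {c : R}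
    (hE : ∀ a b, E a b ≠ 0 → w a - w b = c) (μ : R) (F : Matrix K K R) :
    weightPart w μ F * E = weightPart w (c + μ) (F * E) := by
  ext k q
  simp only [weightPart, of_apply, mul_apply]
  by_cases hkq : w k - w q = c + μ
  · refine (sum_congr rfl fun p _ => ?_).trans (if_pos hkq).symm
    by_cases hp : E p q = 0
    · simp [hp]
    · rw [if_pos (by linear_combination hkq - hE p q hp)]
  · refine (sum_eq_zero fun p _ => ?_).trans (if_neg hkq).symm
    by_cases hp : E p q = 0
    · simp [hp]
    · rw [if_neg fun h => hkq (by linear_combination h + hE p q hp), zero_mul]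

lemma lie_weightPart {w : K → R} {E : Matrix K K R} {c : R}
    (hE : ∀ a b, E a b ≠ 0 → w a - w b = c) (μ : R) (F : Matrix K K R) :
    ⁅E, weightPart w μ F⁆ = weightPart w (c + μ) ⁅E, F⁆ := by
  rw [Ring.lie_def, Ring.lie_def, mul_weightPart hE, weightPart_mul hE]
  ext k q
  simp only [weightPart, of_apply, Matrix.sub_apply]
  split_ifs <;> simp

lemma lie_diagonal_weightPart [DecidableEq K] (w : K → R) (μ : R) (F : Matrix K K R) :
    ⁅diagonal w, weightPart w μ F⁆ = μ • weightPart w μ F := by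
  ext k q
  rw [lie_diagonal_apply, Matrix.smul_apply, weightPart, of_apply]
  split_ifs with h <;> simp [h]

end WeightPart

section Centralizer

variable {K 𝕜 : Type*} [Fintype K] [DecidableEq K] [Field 𝕜]

lemma sub_eq_of_lie_diagonal {w : K → 𝕜} {E : Matrix K K 𝕜} {c : 𝕜}
    (hE : ⁅diagonal w, E⁆ = c • E) (a b : K) (hab : E a b ≠ 0) : w a - w b = c := by
  have := congrFun (congrFun hE a) b
  rw [lie_diagonal_apply, Matrix.smul_apply, smul_eq_mul] at this
  exact mul_right_cancel₀ hab this

theorem exists_nat_sub_eq_of_lie_eq_zero [CharZero 𝕜] {w : K → 𝕜} {E Fl F : Matrix K K 𝕜}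
    (t : IsSl2Triple (diagonal w) E Fl) (hF : ⁅E, F⁆ = 0) {k q : K} (hkq : F k q ≠ 0) :
    ∃ m : ℕ, w k - w q = m := by
  classical
  have hE := sub_eq_of_lie_diagonal (t.lie_h_e_smul 𝕜)
  have hprim : t.HasPrimitiveVectorWith (weightPart w (w k - w q) F) (w k - w q) :=
    { ne_zero := fun h0 => hkq (by simpa [weightPart] using congrFun (congrFun h0 k) q)
      lie_h := lie_diagonal_weightPart w _ F
      lie_e := by rw [lie_weightPart hE, hF]; ext; simp [weightPart] }
  exact hprim.exists_nat

end Centralizer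

section Slot

variable {ι α R : Type*} [Fintype ι] [DecidableEq ι] [DecidableEq α] [CommRing R]

-- `slotMat i M` is `M` acting on the `i`-th factor of the tensor power; their sum `dPhiMat` is
-- the differential of `g ↦ g^{⊗ ι}` at `g = 1` (see `hasDerivAt_phiMat_one_add_smul`).
def slotMat (i : ι) : Matrix α α R →ₗ[R] Matrix (ι → α) (ι → α) R where
  toFun M := Matrix.of fun k q => if Function.update k i (q i) = q then M (k i) (q i) else 0
  map_add' A B := by ext k q; by_cases h : Function.update k i (q i) = q <;> simp [h]
  map_smul' c A := by ext k q; by_cases h : Function.update k i (q i) = q <;> simp [h]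

lemma slotMat_apply (i : ι) (M : Matrix α α R) (k q : ι → α) :
    slotMat i M k q = if Function.update k i (q i) = q then M (k i) (q i) else 0 := rfl

lemma slotMat_apply_eq_prod (i : ι) (M : Matrix α α R) (k q : ι → α) :
    slotMat i M k q = (∏ j ∈ univ.erase i, (1 : Matrix α α R) (k j) (q j)) * M (k i) (q i) := by
  simp only [slotMat_apply, one_apply, prod_boole, Function.update_eq_iff, mem_erase, ne_eq,
    mem_univ, and_true, true_and, ite_mul, one_mul, zero_mul]

variable [Fintype α]

lemma sum_update_eq_sum_filter (k : ι → α) (i : ι) (g : (ι → α) → R) :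
    ∑ y, g (Function.update k i y) = ∑ p with Function.update k i (p i) = p, g p := by
  have := sum_map univ ⟨_, Function.update_injective k i⟩ g
  simp only [Function.Embedding.coeFn_mk] at this
  rw [← this]
  congr 1
  ext p
  simp only [mem_map, mem_univ, true_and, Function.Embedding.coeFn_mk, mem_filter]
  exact ⟨fun ⟨y, hy⟩ => hy ▸ by simp, fun hp => ⟨p i, hp⟩⟩

lemma slotMat_mul_apply (i : ι) (A : Matrix α α R) (X : Matrix (ι → α) (ι → α) R)
    (k q : ι → α) : (slotMat i A * X) k q = ∑ y, A (k i) y * X (Function.update k i y) q := by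
  have := sum_update_eq_sum_filter k i (fun p => A (k i) (p i) * X p q)
  simp only [Function.update_self] at this
  rw [this, sum_filter, mul_apply]
  simp only [slotMat_apply, ite_mul, zero_mul]

lemma slotMat_mul_slotMat_self (i : ι) (A B : Matrix α α R) :
    slotMat i A * slotMat i B = slotMat i (A * B) := by
  ext k q
  rw [slotMat_mul_apply]
  simp only [slotMat_apply, Function.update_idem, Function.update_self, mul_apply, mul_ite,
    mul_zero]
  split_ifs <;> simp

lemma slotMat_mul_slotMat_apply_of_ne {i j : ι} (hij : i ≠ j) (A B : Matrix α α R)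
    (k q : ι → α) : (slotMat i A * slotMat j B) k q =
      if Function.update (Function.update k i (q i)) j (q j) = q
      then A (k i) (q i) * B (k j) (q j) else 0 := by
  rw [slotMat_mul_apply, sum_eq_single (q i)]
  · simp [slotMat_apply, Function.update_of_ne hij.symm]
  · intro y _ hy
    rw [slotMat_apply, if_neg, mul_zero]
    exact fun h => hy (by simpa [Function.update_of_ne hij] using congrFun h i)
  · simp

lemma slotMat_mul_slotMat_comm {i j : ι} (hij : i ≠ j) (A B : Matrix α α R) :
    slotMat i A * slotMat j B = slotMat j B * slotMat i A := by
  ext k q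
  rw [slotMat_mul_slotMat_apply_of_ne hij, slotMat_mul_slotMat_apply_of_ne hij.symm,
    Function.update_comm hij, mul_comm]

def dPhiMat : Matrix α α R →ₗ⁅R⁆ Matrix (ι → α) (ι → α) R where
  toFun M := ∑ i, slotMat i M
  map_add' A B := by simp only [map_add, sum_add_distrib]
  map_smul' c A := by simp only [map_smul, smul_sum, RingHom.id_apply]
  map_lie' {A B} := by
    simp only [Ring.lie_def, sum_mul_sum]
    rw [sum_comm (s := univ) (t := univ) (f := fun i j => slotMat i B * slotMat j A),
      ← sum_sub_distrib]
    refine sum_congr rfl fun i _ => ?_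
    rw [← sum_sub_distrib, sum_eq_single i, slotMat_mul_slotMat_self, slotMat_mul_slotMat_self,
      map_sub]
    · intro j _ hji
      rw [slotMat_mul_slotMat_comm hji.symm, sub_self]
    · simp

lemma dPhiMat_apply (M : Matrix α α R) : dPhiMat (ι := ι) M = ∑ i, slotMat i M := rfl

lemma dPhiMat_diagonal (d : α → R) :
    dPhiMat (ι := ι) (diagonal d) = diagonal fun k => ∑ i, d (k i) := by
  ext k q
  simp only [dPhiMat_apply, Matrix.sum_apply, slotMat_apply, diagonal_apply]
  by_cases hkq : k = q
  · subst hkq; simp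
  · refine (sum_eq_zero fun i _ => ?_).trans (if_neg hkq).symm
    split_ifs with h h'
    · rw [← h', Function.update_eq_self] at h
      exact absurd h hkq
    all_goals rfl

end Slot

lemma hasDerivAt_phiMat_one_add_smul {N m : ℕ} (M : Matrix (Fin N) (Fin N) ℂ)
    (k q : Fin m → Fin N) :
    HasDerivAt (fun t : ℂ => PhiMat (m := m) (1 + t • M) k q) (dPhiMat M k q) 0 := by
  have hfactor : ∀ i ∈ (univ : Finset (Fin m)), HasDerivAt
      (fun t : ℂ => (1 : Matrix (Fin N) (Fin N) ℂ) (k i) (q i) + t * M (k i) (q i))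
      (M (k i) (q i)) 0 := fun i _ => (hasDerivAt_mul_const _).const_add _
  have hvalue : dPhiMat M k q = ∑ i, (∏ j ∈ univ.erase i,
      ((1 : Matrix (Fin N) (Fin N) ℂ) (k j) (q j) + 0 * M (k j) (q j))) • M (k i) (q i) := by
    simp only [zero_mul, add_zero, smul_eq_mul, dPhiMat_apply, Matrix.sum_apply,
      slotMat_apply_eq_prod]
  rw [hvalue]
  exact HasDerivAt.fun_finsetProd hfactor

lemma lie_dPhiMat_eq_zero_of_commute {N m : ℕ} (M : Matrix (Fin N) (Fin N) ℂ)
    (F : Matrix (Fin m → Fin N) (Fin m → Fin N) ℂ)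
    (hF : ∀ t : ℂ, F * PhiMat (1 + t • M) = PhiMat (1 + t • M) * F) :
    ⁅dPhiMat (ι := Fin m) M, F⁆ = 0 := by
  ext k q
  have hleft : HasDerivAt (fun t : ℂ => (F * PhiMat (1 + t • M) : Matrix _ _ ℂ) k q)
      ((F * dPhiMat M : Matrix _ _ ℂ) k q) 0 := by
    simp only [mul_apply]
    exact HasDerivAt.fun_sum fun p _ => (hasDerivAt_phiMat_one_add_smul M p q).const_mul _
  have hright : HasDerivAt (fun t : ℂ => (PhiMat (1 + t • M) * F : Matrix _ _ ℂ) k q)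
      ((dPhiMat M * F : Matrix _ _ ℂ) k q) 0 := by
    simp only [mul_apply]
    exact HasDerivAt.fun_sum fun p _ => (hasDerivAt_phiMat_one_add_smul M k p).mul_const _
  simp only [hF] at hleft
  rw [Ring.lie_def, Matrix.sub_apply, hright.unique hleft, sub_self, Matrix.zero_apply]

lemma encMat_one_single {n : ℕ} (a : Fin n) (t : ℂ) :
    encMat 1 (Pi.single a t) = 1 + t • single (Fin.castSucc a) (Fin.last n) 1 := by
  ext i j
  induction i using Fin.lastCases <;> induction j using Fin.lastCases <;>
    simp [encMat, one_apply, single_apply, Pi.single_apply, eq_comm, Fin.castSucc_ne_last]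

def sl2Weight {n : ℕ} (a : Fin n) : Fin (n + 1) → ℂ :=
  Pi.single (Fin.castSucc a) 1 - Pi.single (Fin.last n) 1

lemma sum_sl2Weight_add {n : ℕ} (x : Fin (n + 1)) :
    ∑ a : Fin n, sl2Weight a x + n = (n + 1) * if x = Fin.last n then 0 else 1 := by
  induction x using Fin.lastCases with
  | last => simp [sl2Weight]
  | cast b => simp [sl2Weight, Pi.single_apply, Fin.castSucc_ne_last, add_comm]

lemma sum_sum_sl2Weight_add {n r : ℕ} (k : Fin r → Fin (n + 1)) :
    ∑ a : Fin n, ∑ i, sl2Weight a (k i) + n * r = (n + 1) * levelOf k := by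
  calc _ = ∑ i, (∑ a : Fin n, sl2Weight a (k i) + n) := by
        rw [sum_comm, sum_add_distrib, sum_const, card_univ, Fintype.card_fin, nsmul_eq_mul,
          mul_comm]
    _ = ∑ i, ((n : ℂ) + 1) * if k i = Fin.last n then 0 else 1 :=
        sum_congr rfl fun i _ => sum_sl2Weight_add (k i)
    _ = (n + 1) * levelOf k := by
        rw [← mul_sum, levelOf, card_filter]
        push_cast
        simp only [ite_not]

lemma levelOf_le_of_apply_ne_zero {n r : ℕ}
    {F : Matrix (Fin r → Fin (n + 1)) (Fin r → Fin (n + 1)) ℂ}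
    (hF : ∀ v : Fin n → ℂ, F * PhiMat (encMat 1 v) = PhiMat (encMat 1 v) * F)
    {k q : Fin r → Fin (n + 1)} (hkq : F k q ≠ 0) : levelOf q ≤ levelOf k := by
  have hweight : ∀ a : Fin n, ∃ m : ℕ,
      ∑ i, sl2Weight a (k i) - ∑ i, sl2Weight a (q i) = m := by
    intro a
    have he : ⁅dPhiMat (ι := Fin r) (single (Fin.castSucc a) (Fin.last n) (1 : ℂ)), F⁆ = 0 :=
      lie_dPhiMat_eq_zero_of_commute _ F fun t => by
        simpa only [encMat_one_single] using hF (Pi.single a t)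
    by_cases h0 : dPhiMat (ι := Fin r) (diagonal (sl2Weight a)) = 0
    · rw [dPhiMat_diagonal, diagonal_eq_zero] at h0
      have hk := congrFun h0 k
      have hq := congrFun h0 q
      simp only [Pi.zero_apply] at hk hq
      exact ⟨0, by rw [hk, hq, sub_zero, Nat.cast_zero]⟩
    · have t := (isSl2Triple_single (Fin.castSucc_ne_last a)).map dPhiMat h0
      rw [dPhiMat_diagonal] at t
      exact exists_nat_sub_eq_of_lie_eq_zero t he hkq
  choose m hm using hweight
  have hsum : ((n + 1) * levelOf k : ℂ) = (n + 1) * levelOf q + ∑ a, (m a : ℂ) := by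
    rw [← sum_sum_sl2Weight_add, ← sum_sum_sl2Weight_add, ← sum_congr rfl fun a _ => hm a, sum_sub_distrib]
    ring
  have hnat : (n + 1) * levelOf k = (n + 1) * levelOf q + ∑ a, m a := by exact_mod_cast hsum
  exact Nat.le_of_mul_le_mul_left (hnat ▸ Nat.le_add_right _ _) n.succ_pos

theorem endo_of_enhanced_group_preserves_filtration_general {n r : ℕ}
    (Gs : Set (Matrix (Fin n) (Fin n) ℂ)) (h1 : (1 : Matrix (Fin n) (Fin n) ℂ) ∈ Gs)
    (f : ((Fin r → Fin (n + 1)) → ℂ) →ₗ[ℂ] ((Fin r → Fin (n + 1)) → ℂ))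
    (hf : ∀ g ∈ Gs, ∀ v : Fin n → ℂ,
      f ∘ₗ (PhiMat (m := r) (encMat g v)).mulVecLin =
        (PhiMat (m := r) (encMat g v)).mulVecLin ∘ₗ f) :
    (∀ l, l ≤ r → ∀ x : (Fin r → Fin (n + 1)) → ℂ,
        (∀ k, levelOf (n := n) k ≠ l → x k = 0) →
        ∀ k, levelOf (n := n) k < l → f x k = 0) ∧
    (∀ l, l ≤ r → ∀ x : (Fin r → Fin (n + 1)) → ℂ,
        (∀ k, levelOf (n := n) k < l → x k = 0) →
        ∀ k, levelOf (n := n) k < l → f x k = 0) := by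
  have hF : ∀ v : Fin n → ℂ, LinearMap.toMatrix' f * PhiMat (encMat 1 v) =
      PhiMat (encMat 1 v) * LinearMap.toMatrix' f := fun v => by
    simpa only [LinearMap.toMatrix'_comp, ← Matrix.toLin'_apply', LinearMap.toMatrix'_toLin']
      using congrArg LinearMap.toMatrix' (hf 1 h1 v)
  have hW : ∀ l, l ≤ r → ∀ x : (Fin r → Fin (n + 1)) → ℂ,
      (∀ k, levelOf (n := n) k < l → x k = 0) → ∀ k, levelOf (n := n) k < l → f x k = 0 := by
    intro l _ x hx k hk
    rw [← Matrix.toLin'_toMatrix' f, Matrix.toLin'_apply]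
    refine sum_eq_zero fun q _ => ?_
    by_cases hq : levelOf q < l
    · rw [hx q hq, mul_zero]
    · by_contra hne
      exact hq (lt_of_le_of_lt (levelOf_le_of_apply_ne_zero hF (left_ne_zero_of_mul hne)) hk)
  exact ⟨fun l hl x hx => hW l hl x fun k hk => hx k hk.ne, hW⟩

/-- Let `G` be a closed subgroup of `GL(V)` (a set `Gs` of invertible
matrices containing `1`) and `G̲ = G ×_ρ V` the enhanced group acting diagonally on
`V̲^{⊗r}` via the matrices `encMat g v`.  For every `G̲`-equivariant linear endomorphism
`f` of `V̲^{⊗r}` and every `0 ≤ l ≤ r`, we have `f(V̲_l^{⊗r}) ⊆ W_l`, where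
`W_l = ⊕_{t=l}^{r} V̲_t^{⊗r}`; in particular `f` preserves the filtration
`W_0 ⊇ W_1 ⊇ ⋯ ⊇ W_r`. -/
theorem endo_of_enhanced_group_preserves_filtration {n r : ℕ}
    (Gs : Set (Matrix (Fin n) (Fin n) ℂ)) (h1 : (1 : Matrix (Fin n) (Fin n) ℂ) ∈ Gs)
    (hunit : ∀ g ∈ Gs, IsUnit g)
    (f : ((Fin r → Fin (n + 1)) → ℂ) →ₗ[ℂ] ((Fin r → Fin (n + 1)) → ℂ))
    (hf : ∀ g ∈ Gs, ∀ v : Fin n → ℂ,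
      f ∘ₗ (PhiMat (m := r) (encMat g v)).mulVecLin =
        (PhiMat (m := r) (encMat g v)).mulVecLin ∘ₗ f) :
    (∀ l, l ≤ r → ∀ x : (Fin r → Fin (n + 1)) → ℂ,
        (∀ k, levelOf (n := n) k ≠ l → x k = 0) →
        ∀ k, levelOf (n := n) k < l → f x k = 0) ∧
    (∀ l, l ≤ r → ∀ x : (Fin r → Fin (n + 1)) → ℂ,
        (∀ k, levelOf (n := n) k < l → x k = 0) →
        ∀ k, levelOf (n := n) k < l → f x k = 0) :=
  endo_of_enhanced_group_preserves_filtration_general Gs h1 f hf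

end EnhancedBrauer
end

section
/- Let G = O(V) or Sp(V) and I, J ⊆ {1,...,r} with #I = #J = s. Then Hom_G(V̲_I^{⊗r}, V̲_J^{⊗r}) = E_{JI} ∘ B_s^{(I)}(εn), i.e., every G-module homomorphism V̲_I^{⊗r} → V̲_J^{⊗r} is of the form E_{JI} ∘ σ^I for a unique σ ∈ B_s(εn), and conversely all such maps are G-homomorphisms. -/
open Finset Matrix

namespace EnhancedBrauer

/-! Since `encMat g 0` preserves `V` and fixes `η`, the diagonal action of `G` on `V̲^{⊗r}` is
block diagonal for the decomposition into the summands `V̲_K^{⊗r}`, and on `V̲_K^{⊗r}` it is the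
action on `V^{⊗s}` transported along `emb K`.  A matrix living on the `(J, I)` block is determined
by that block, and it commutes with `G` exactly when the block does, i.e. when the block lies in
`B_s(εn)`.  Finally `E_{JI} ∘ σ^I` is the matrix whose `(J, I)` block is `σ`. -/

/-- The matrix `M` maps `V̲_I^{⊗r}` to `V̲_J^{⊗r}` and vanishes on the other summands. -/
def IsSupportedOn {n r : ℕ} (J I : Finset (Fin r))
    (M : Matrix (Fin r → Fin (n + 1)) (Fin r → Fin (n + 1)) ℂ) : Prop :=
  ∀ k q, M k q ≠ 0 → isSupp J k ∧ isSupp I q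

section Emb

variable {n r s : ℕ} {K : Finset (Fin r)} (hK : K.card = s)

lemma emb_apply_of_mem (a : Fin s → Fin n) {i : Fin r} (h : i ∈ K) :
    emb K hK a i = Fin.castSucc (a ((K.orderIsoOfFin hK).symm ⟨i, h⟩)) := dif_pos h

lemma emb_apply_of_notMem (a : Fin s → Fin n) {i : Fin r} (h : i ∉ K) :
    emb K hK a i = Fin.last n := dif_neg h

lemma emb_apply_orderEmbOfFin (a : Fin s → Fin n) (j : Fin s) :
    emb K hK a (K.orderEmbOfFin hK j) = Fin.castSucc (a j) := by
  rw [← Finset.coe_orderIsoOfFin_apply, emb_apply_of_mem hK a (K.orderIsoOfFin hK j).2]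
  simp only [Subtype.coe_eta, OrderIso.symm_apply_apply]

lemma emb_injective_s19 : Function.Injective (emb (n := n) K hK) := by
  intro a b h
  funext j
  have hj := congrFun h (K.orderEmbOfFin hK j)
  rw [emb_apply_orderEmbOfFin, emb_apply_orderEmbOfFin] at hj
  exact Fin.castSucc_injective _ hj

lemma isSupp_emb_s19 (a : Fin s → Fin n) : isSupp K (emb K hK a) := by
  intro i
  by_cases hi : i ∈ K
  · simp [hi, emb_apply_of_mem hK a hi, (Fin.castSucc_lt_last _).ne]
  · simp [hi, emb_apply_of_notMem hK a hi]

lemma isSupp_iff_mem_range_emb (k : Fin r → Fin (n + 1)) :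
    isSupp K k ↔ k ∈ Set.range (emb K hK) := by
  refine ⟨fun h => ?_, by rintro ⟨a, rfl⟩; exact isSupp_emb_s19 hK a⟩
  refine ⟨fun j => (k (K.orderIsoOfFin hK j)).castPred ((h _).mp (K.orderIsoOfFin hK j).2), ?_⟩
  funext i
  by_cases hi : i ∈ K
  · rw [emb_apply_of_mem hK _ hi, Fin.castSucc_castPred, OrderIso.apply_symm_apply]
  · rw [emb_apply_of_notMem hK _ hi]
    exact (not_not.mp fun hne => hi ((h i).mpr hne)).symm

lemma submatrix_mul_of_isSupp {α β : Type*}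
    (M N : Matrix (Fin r → Fin (n + 1)) (Fin r → Fin (n + 1)) ℂ)
    (e₁ : α → Fin r → Fin (n + 1)) (e₂ : β → Fin r → Fin (n + 1))
    (h : ∀ x y p, ¬ isSupp K p → M (e₁ x) p * N p (e₂ y) = 0) :
    (M * N).submatrix e₁ e₂ = M.submatrix e₁ (emb K hK) * N.submatrix (emb K hK) e₂ := by
  ext x y
  refine (Fintype.sum_of_injective _ (emb_injective_s19 hK) _ _ (fun p hp => h x y p ?_)
    fun _ => rfl).symm
  rwa [isSupp_iff_mem_range_emb hK]

end Emb

section Action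

variable {n r s : ℕ}

lemma encMat_castSucc_castSucc (g : Matrix (Fin n) (Fin n) ℂ) (v : Fin n → ℂ) (x y : Fin n) :
    encMat g v x.castSucc y.castSucc = g x y := by
  simp [encMat]

lemma encMat_last_last (g : Matrix (Fin n) (Fin n) ℂ) (v : Fin n → ℂ) :
    encMat g v (Fin.last n) (Fin.last n) = 1 := by
  simp [encMat]

lemma eq_last_iff_of_encMat_zero_ne_zero {g : Matrix (Fin n) (Fin n) ℂ} {x y : Fin (n + 1)}
    (h : encMat g 0 x y ≠ 0) : x = Fin.last n ↔ y = Fin.last n := by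
  contrapose! h
  rcases h with ⟨rfl, hy⟩ | ⟨hx, rfl⟩
  · simp [encMat, Fin.val_lt_last hy]
  · simp [encMat, Fin.val_lt_last hx]

lemma isSupp_iff_of_PhiMat_encMat_ne_zero {g : Matrix (Fin n) (Fin n) ℂ}
    {k p : Fin r → Fin (n + 1)} (h : PhiMat (encMat g 0) k p ≠ 0) (K : Finset (Fin r)) :
    isSupp K k ↔ isSupp K p := by
  have hkp i : k i = Fin.last n ↔ p i = Fin.last n :=
    eq_last_iff_of_encMat_zero_ne_zero (Finset.prod_ne_zero_iff.mp h i (Finset.mem_univ i))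
  simp only [isSupp, ne_eq, hkp]

lemma submatrix_PhiMat_encMat {K : Finset (Fin r)} (hK : K.card = s)
    (g : Matrix (Fin n) (Fin n) ℂ) :
    (PhiMat (encMat g 0)).submatrix (emb K hK) (emb K hK) = PhiMat g := by
  ext a b
  rw [submatrix_apply, PhiMat, ← Finset.prod_subset (Finset.subset_univ K) fun i _ hi => by
    rw [emb_apply_of_notMem hK a hi, emb_apply_of_notMem hK b hi, encMat_last_last],
    ← Finset.prod_coe_sort, ← (K.orderIsoOfFin hK).toEquiv.prod_comp]
  simp [PhiMat, emb_apply_orderEmbOfFin, encMat_castSucc_castSucc]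

variable {I J : Finset (Fin r)} (hI : I.card = s) (hJ : J.card = s)

lemma submatrix_PhiMat_encMat_mul (g : Matrix (Fin n) (Fin n) ℂ)
    (M : Matrix (Fin r → Fin (n + 1)) (Fin r → Fin (n + 1)) ℂ) :
    (PhiMat (encMat g 0) * M).submatrix (emb J hJ) (emb I hI)
      = PhiMat g * M.submatrix (emb J hJ) (emb I hI) := by
  rw [submatrix_mul_of_isSupp hJ, submatrix_PhiMat_encMat]
  intro a b p hp
  by_contra hne
  exact hp ((isSupp_iff_of_PhiMat_encMat_ne_zero (left_ne_zero_of_mul hne) J).mp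
    (isSupp_emb_s19 hJ a))

lemma submatrix_mul_PhiMat_encMat (g : Matrix (Fin n) (Fin n) ℂ)
    (M : Matrix (Fin r → Fin (n + 1)) (Fin r → Fin (n + 1)) ℂ) :
    (M * PhiMat (encMat g 0)).submatrix (emb J hJ) (emb I hI)
      = M.submatrix (emb J hJ) (emb I hI) * PhiMat g := by
  rw [submatrix_mul_of_isSupp hI, submatrix_PhiMat_encMat]
  intro a b p hp
  by_contra hne
  exact hp ((isSupp_iff_of_PhiMat_encMat_ne_zero (right_ne_zero_of_mul hne) I).mpr
    (isSupp_emb_s19 hI b))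

end Action

namespace IsSupportedOn

variable {n r s : ℕ} {I J K : Finset (Fin r)}
  {M N : Matrix (Fin r → Fin (n + 1)) (Fin r → Fin (n + 1)) ℂ}

lemma mul (hM : IsSupportedOn K J M) (hN : IsSupportedOn J I N) :
    IsSupportedOn K I (M * N) := by
  intro k q h
  obtain ⟨p, -, hp⟩ := Finset.exists_ne_zero_of_sum_ne_zero h
  exact ⟨(hM k p (left_ne_zero_of_mul hp)).1, (hN p q (right_ne_zero_of_mul hp)).2⟩

lemma PhiMat_encMat_mul (hM : IsSupportedOn J I M) (g : Matrix (Fin n) (Fin n) ℂ) :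
    IsSupportedOn J I (PhiMat (encMat g 0) * M) := by
  intro k q h
  obtain ⟨p, -, hp⟩ := Finset.exists_ne_zero_of_sum_ne_zero h
  obtain ⟨hJp, hIq⟩ := hM p q (right_ne_zero_of_mul hp)
  exact ⟨(isSupp_iff_of_PhiMat_encMat_ne_zero (left_ne_zero_of_mul hp) J).mpr hJp, hIq⟩

lemma mul_PhiMat_encMat (hM : IsSupportedOn J I M) (g : Matrix (Fin n) (Fin n) ℂ) :
    IsSupportedOn J I (M * PhiMat (encMat g 0)) := by
  intro k q h
  obtain ⟨p, -, hp⟩ := Finset.exists_ne_zero_of_sum_ne_zero h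
  obtain ⟨hJk, hIp⟩ := hM k p (left_ne_zero_of_mul hp)
  exact ⟨hJk, (isSupp_iff_of_PhiMat_encMat_ne_zero (right_ne_zero_of_mul hp) I).mp hIp⟩

lemma ext (hI : I.card = s) (hJ : J.card = s) (hM : IsSupportedOn J I M)
    (hN : IsSupportedOn J I N)
    (h : M.submatrix (emb J hJ) (emb I hI) = N.submatrix (emb J hJ) (emb I hI)) : M = N := by
  ext k q
  by_cases hkq : isSupp J k ∧ isSupp I q
  · obtain ⟨a, rfl⟩ := (isSupp_iff_mem_range_emb hJ k).mp hkq.1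
    obtain ⟨b, rfl⟩ := (isSupp_iff_mem_range_emb hI q).mp hkq.2
    exact congrFun₂ h a b
  · rw [not_imp_comm.mp (hM k q) hkq, not_imp_comm.mp (hN k q) hkq]

end IsSupportedOn

section EnhancedOperators

variable {n r s : ℕ} {I J : Finset (Fin r)} (hI : I.card = s) (hJ : J.card = s)

lemma isSupportedOn_EMat : IsSupportedOn J I (EMat (n := n) J I hJ hI) := by
  intro k q h
  obtain ⟨a, -, ha⟩ := Finset.exists_ne_zero_of_sum_ne_zero h
  obtain ⟨⟨rfl, rfl⟩, -⟩ := ite_ne_right_iff.mp ha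
  exact ⟨isSupp_emb_s19 hJ a, isSupp_emb_s19 hI a⟩

lemma isSupportedOn_opMat (A : Matrix (Fin s → Fin n) (Fin s → Fin n) ℂ) :
    IsSupportedOn I I (opMat I hI A) := by
  intro k q h
  obtain ⟨a, -, ha⟩ := Finset.exists_ne_zero_of_sum_ne_zero h
  obtain ⟨b, -, hb⟩ := Finset.exists_ne_zero_of_sum_ne_zero ha
  obtain ⟨⟨rfl, rfl⟩, -⟩ := ite_ne_right_iff.mp hb
  exact ⟨isSupp_emb_s19 hI a, isSupp_emb_s19 hI b⟩

lemma submatrix_EMat : (EMat (n := n) J I hJ hI).submatrix (emb J hJ) (emb I hI) = 1 := by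
  ext a b
  simp [EMat, one_apply, (emb_injective_s19 hJ).eq_iff, (emb_injective_s19 hI).eq_iff, ite_and, eq_comm]

lemma submatrix_opMat (A : Matrix (Fin s → Fin n) (Fin s → Fin n) ℂ) :
    (opMat I hI A).submatrix (emb I hI) (emb I hI) = A := by
  ext a b
  simp [opMat, (emb_injective_s19 hI).eq_iff, ite_and]

lemma isSupportedOn_EMat_mul_opMat (A : Matrix (Fin s → Fin n) (Fin s → Fin n) ℂ) :
    IsSupportedOn J I (EMat (n := n) J I hJ hI * opMat I hI A) :=
  (isSupportedOn_EMat hI hJ).mul (isSupportedOn_opMat hI A)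

lemma submatrix_EMat_mul_opMat (A : Matrix (Fin s → Fin n) (Fin s → Fin n) ℂ) :
    (EMat (n := n) J I hJ hI * opMat I hI A).submatrix (emb J hJ) (emb I hI) = A := by
  rw [submatrix_mul_of_isSupp hI, submatrix_EMat, submatrix_opMat, one_mul]
  intro a b p hp
  rw [not_imp_comm.mp (isSupportedOn_EMat hI hJ _ p) (hp ∘ And.right), zero_mul]

end EnhancedOperators

theorem hom_eq_EMat_comp_brauer_general {n r s : ℕ} (Q : Matrix (Fin n) (Fin n) ℂ)
    (I J : Finset (Fin r))
    (hI : I.card = s) (hJ : J.card = s) :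
    (∀ M : Matrix (Fin r → Fin (n + 1)) (Fin r → Fin (n + 1)) ℂ,
        (∀ k q, M k q ≠ 0 → isSupp J k ∧ isSupp I q) →
        (∀ g : Matrix (Fin n) (Fin n) ℂ, gᵀ * Q * g = Q →
          PhiMat (m := r) (encMat g 0) * M = M * PhiMat (m := r) (encMat g 0)) →
        ∃! A : Matrix (Fin s → Fin n) (Fin s → Fin n) ℂ,
          A ∈ BrauerSet n s Q ∧ M = EMat (n := n) J I hJ hI * opMat (n := n) I hI A) ∧
    (∀ A ∈ BrauerSet n s Q,
        (∀ (k q : Fin r → Fin (n + 1)), (EMat (n := n) J I hJ hI * opMat (n := n) I hI A) k q ≠ 0 → isSupp J k ∧ isSupp I q) ∧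
        (∀ g : Matrix (Fin n) (Fin n) ℂ, gᵀ * Q * g = Q →
          PhiMat (m := r) (encMat g 0) * (EMat (n := n) J I hJ hI * opMat (n := n) I hI A) =
            (EMat (n := n) J I hJ hI * opMat (n := n) I hI A) * PhiMat (m := r) (encMat g 0))) := by
  refine ⟨fun M hM hcomm => ⟨M.submatrix (emb J hJ) (emb I hI), ⟨fun g hg => ?_, ?_⟩, ?_⟩,
    fun A hA => ⟨isSupportedOn_EMat_mul_opMat hI hJ A, fun g hg => ?_⟩⟩
  · rw [← submatrix_PhiMat_encMat_mul, hcomm g hg, submatrix_mul_PhiMat_encMat]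
  · exact IsSupportedOn.ext hI hJ hM (isSupportedOn_EMat_mul_opMat hI hJ _)
      (submatrix_EMat_mul_opMat hI hJ _).symm
  · rintro A ⟨-, rfl⟩
    exact (submatrix_EMat_mul_opMat hI hJ A).symm
  · have hN := isSupportedOn_EMat_mul_opMat hI hJ A
    refine (hN.PhiMat_encMat_mul g).ext hI hJ (hN.mul_PhiMat_encMat g) ?_
    rw [submatrix_PhiMat_encMat_mul, submatrix_mul_PhiMat_encMat, submatrix_EMat_mul_opMat,
      hA g hg]

/-- Let `G = O(V)` or `Sp(V)` (isometry group of the nondegenerate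
symmetric or skew-symmetric form with matrix `Q`) and `I, J ⊆ {1,…,r}` with
`#I = #J = s`.  Then `Hom_G(V̲_I^{⊗r}, V̲_J^{⊗r}) = E_{JI} ∘ B_s^{(I)}(εn)`: every
`G`-module homomorphism `V̲_I^{⊗r} → V̲_J^{⊗r}` (realized as a matrix supported on
`V̲_J`-rows and `V̲_I`-columns commuting with the `G`-action) equals `E_{JI} ∘ σ^I` for a
unique `σ ∈ B_s(εn)`, and conversely every such map is a `G`-homomorphism. -/
theorem hom_eq_EMat_comp_brauer {n r s : ℕ} (Q : Matrix (Fin n) (Fin n) ℂ)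
    (hQ : IsUnit Q) (hform : Qᵀ = Q ∨ Qᵀ = -Q) (I J : Finset (Fin r))
    (hI : I.card = s) (hJ : J.card = s) :
    (∀ M : Matrix (Fin r → Fin (n + 1)) (Fin r → Fin (n + 1)) ℂ,
        (∀ k q, M k q ≠ 0 → isSupp J k ∧ isSupp I q) →
        (∀ g : Matrix (Fin n) (Fin n) ℂ, gᵀ * Q * g = Q →
          PhiMat (m := r) (encMat g 0) * M = M * PhiMat (m := r) (encMat g 0)) →
        ∃! A : Matrix (Fin s → Fin n) (Fin s → Fin n) ℂ,
          A ∈ BrauerSet n s Q ∧ M = EMat (n := n) J I hJ hI * opMat (n := n) I hI A) ∧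
    (∀ A ∈ BrauerSet n s Q,
        (∀ (k q : Fin r → Fin (n + 1)), (EMat (n := n) J I hJ hI * opMat (n := n) I hI A) k q ≠ 0 → isSupp J k ∧ isSupp I q) ∧
        (∀ g : Matrix (Fin n) (Fin n) ℂ, gᵀ * Q * g = Q →
          PhiMat (m := r) (encMat g 0) * (EMat (n := n) J I hJ hI * opMat (n := n) I hI A) =
            (EMat (n := n) J I hJ hI * opMat (n := n) I hI A) * PhiMat (m := r) (encMat g 0))) :=
  hom_eq_EMat_comp_brauer_general Q I J hI hJ

end EnhancedBrauer
end
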